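/- arXiv:1205.3852 — 5 statements merged into one kernel-verified Lean document; each statement's English description precedes it below -/
import Mathlib

section
/- Let T be a bounded linear operator with closed range between Hilbert spaces. Then (T*T)† = T† (T*)†. -/
open ContinuousLinearMap

/-- `S` is a Moore–Penrose inverse of `T`: the four Penrose equations. -/
def IsMoorePenrose {H K : Type*} [NormedAddCommGroup H] [InnerProductSpace ℂ H]
    [CompleteSpace H] [NormedAddCommGroup K] [InnerProductSpace ℂ K] [CompleteSpace K]
    (T : H →L[ℂ] K) (S : K →L[ℂ] H) : Prop :=
  T ∘L S ∘L T = T ∧ S ∘L T ∘L S = S ∧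
    adjoint (T ∘L S) = T ∘L S ∧ adjoint (S ∘L T) = S ∘L T

private lemma mp_unique {H K : Type*} [NormedAddCommGroup H] [InnerProductSpace ℂ H]
    [CompleteSpace H] [NormedAddCommGroup K] [InnerProductSpace ℂ K] [CompleteSpace K]
    {A : H →L[ℂ] K} {B C : K →L[ℂ] H}
    (hB : IsMoorePenrose A B) (hC : IsMoorePenrose A C) : B = C := by
  obtain ⟨b1, b2, b3, b4⟩ := hB
  obtain ⟨c1, c2, c3, c4⟩ := hC
  have b1pt : ∀ x, A (B (A x)) = A x := fun x => DFunLike.congr_fun b1 x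
  have b2pt : ∀ x, B (A (B x)) = B x := fun x => DFunLike.congr_fun b2 x
  have c1pt : ∀ x, A (C (A x)) = A x := fun x => DFunLike.congr_fun c1 x
  have c2pt : ∀ x, C (A (C x)) = C x := fun x => DFunLike.congr_fun c2 x
  have hAB : A ∘L B = A ∘L C := by
    calc A ∘L B = adjoint (A ∘L B) := b3.symm
    _ = adjoint ((A ∘L C) ∘L (A ∘L B)) := by
        congr 1; ext x; exact (c1pt (B x)).symm
    _ = adjoint (A ∘L B) ∘L adjoint (A ∘L C) := adjoint_comp _ _
    _ = (A ∘L B) ∘L (A ∘L C) := by rw [b3, c3]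
    _ = A ∘L C := by ext x; exact b1pt (C x)
  have hBA : B ∘L A = C ∘L A := by
    calc B ∘L A = adjoint (B ∘L A) := b4.symm
    _ = adjoint ((B ∘L A) ∘L (C ∘L A)) := by
        congr 1; ext x
        show B (A x) = B (A (C (A x)))
        rw [c1pt]
    _ = adjoint (C ∘L A) ∘L adjoint (B ∘L A) := adjoint_comp _ _
    _ = (C ∘L A) ∘L (B ∘L A) := by rw [b4, c4]
    _ = C ∘L A := by ext x; exact congrArg C (b1pt x)
  have hABpt : ∀ x, A (B x) = A (C x) := fun x => DFunLike.congr_fun hAB x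
  have hBApt : ∀ x, B (A x) = C (A x) := fun x => DFunLike.congr_fun hBA x
  ext x
  calc B x = B (A (B x)) := (b2pt x).symm
  _ = B (A (C x)) := by rw [hABpt x]
  _ = C (A (C x)) := hBApt (C x)
  _ = C x := c2pt x

private lemma mp_adjoint {H K : Type*} [NormedAddCommGroup H] [InnerProductSpace ℂ H]
    [CompleteSpace H] [NormedAddCommGroup K] [InnerProductSpace ℂ K] [CompleteSpace K]
    {T : H →L[ℂ] K} {S : K →L[ℂ] H} (h : IsMoorePenrose T S) :
    IsMoorePenrose (adjoint T) (adjoint S) := by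
  obtain ⟨h1, h2, h3, h4⟩ := h
  refine ⟨?_, ?_, ?_, ?_⟩
  · have := congrArg adjoint h1
    simpa only [adjoint_comp, comp_assoc] using this
  · have := congrArg adjoint h2
    simpa only [adjoint_comp, comp_assoc] using this
  · rw [← adjoint_comp, adjoint_adjoint]; exact h4.symm
  · rw [← adjoint_comp, adjoint_adjoint]; exact h3.symm

theorem gram_mp_eq_mp_comp_adjoint_mp
    {H K : Type*} [NormedAddCommGroup H] [InnerProductSpace ℂ H] [CompleteSpace H]
    [NormedAddCommGroup K] [InnerProductSpace ℂ K] [CompleteSpace K]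
    (T : H →L[ℂ] K) (hT : IsClosed (Set.range T))
    (Td : K →L[ℂ] H) (hTd : IsMoorePenrose T Td)
    (Sd : H →L[ℂ] K) (hSd : IsMoorePenrose (adjoint T) Sd)
    (G : H →L[ℂ] H) (hG : IsMoorePenrose (adjoint T ∘L T) G) :
    G = Td ∘L Sd := by
  have hSd' : Sd = adjoint Td := mp_unique hSd (mp_adjoint hTd)
  obtain ⟨a, b, c, d⟩ := hTd
  -- operator-level consequences of the symmetry conditions
  have c' : adjoint Td ∘L adjoint T = T ∘L Td := by rw [← adjoint_comp]; exact c
  have d' : adjoint T ∘L adjoint Td = Td ∘L T := by rw [← adjoint_comp]; exact d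
  have apt : ∀ x, T (Td (T x)) = T x := fun x => DFunLike.congr_fun a x
  have bpt : ∀ x, Td (T (Td x)) = Td x := fun x => DFunLike.congr_fun b x
  have cpt : ∀ x, adjoint Td (adjoint T x) = T (Td x) := fun x => DFunLike.congr_fun c' x
  have dpt : ∀ x, adjoint T (adjoint Td x) = Td (T x) := fun x => DFunLike.congr_fun d' x
  have key : IsMoorePenrose (adjoint T ∘L T) (Td ∘L adjoint Td) := by
    have hBA : (Td ∘L adjoint Td) ∘L (adjoint T ∘L T) = Td ∘L T := by
      ext x
      show Td (adjoint Td (adjoint T (T x))) = Td (T x)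
      rw [cpt, bpt]
    have hAB : (adjoint T ∘L T) ∘L (Td ∘L adjoint Td) = Td ∘L T := by
      ext x
      show adjoint T (T (Td (adjoint Td x))) = Td (T x)
      rw [← cpt, dpt, dpt, bpt]
    refine ⟨?_, ?_, ?_, ?_⟩
    · rw [hBA]
      ext x
      show adjoint T (T (Td (T x))) = adjoint T (T x)
      rw [apt]
    · rw [hAB]
      ext x
      show Td (adjoint Td (Td (T x))) = Td (adjoint Td x)
      rw [← dpt, cpt, bpt]
    · rw [hAB]; exact d
    · rw [hBA]; exact d
  rw [hSd']
  exact mp_unique hG key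
end

section
/- Let T be a bounded linear operator on a Hilbert space with closed range, and let S be a bounded operator commuting with both T and T*. Then S commutes with the Moore–Penrose inverse T†: S T† = T† S. -/
open ContinuousLinearMap

theorem commutes_with_mp
    {H : Type*} [NormedAddCommGroup H] [InnerProductSpace ℂ H] [CompleteSpace H]
    (T : H →L[ℂ] H) (hT : IsClosed (Set.range T))
    (Td : H →L[ℂ] H) (hTd : IsMoorePenrose T Td)
    (S : H →L[ℂ] H) (hST : S ∘L T = T ∘L S) (hSTa : S ∘L adjoint T = adjoint T ∘L S) :
    S ∘L Td = Td ∘L S := by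
  obtain ⟨h1, h2, h3, h4⟩ := hTd
  have p1 : ∀ x, T (Td (T x)) = T x := fun x => by
    have := DFunLike.congr_fun h1 x; simpa using this
  have p2 : ∀ x, Td (T (Td x)) = Td x := fun x => by
    have := DFunLike.congr_fun h2 x; simpa using this
  have pst : ∀ x, S (T x) = T (S x) := fun x => by
    have := DFunLike.congr_fun hST x; simpa using this
  have hS'T : T ∘L adjoint S = adjoint S ∘L T := by
    have := congrArg adjoint hSTa
    simp only [adjoint_comp, adjoint_adjoint] at this
    exact this
  have psa : ∀ x, T (adjoint S x) = adjoint S (T x) := fun x => by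
    have := DFunLike.congr_fun hS'T x; simpa using this
  -- P = T ∘L Td
  set P := T ∘L Td with hPdef
  have hPadj : adjoint P = P := h3
  have hPSaP : P ∘L (adjoint S ∘L P) = adjoint S ∘L P := by
    ext x
    simp only [hPdef, comp_apply]
    rw [← psa, p1, psa]
  have hPSP2 : ∀ x, T (Td (S (T (Td x)))) = T (Td (S x)) := by
    have h := congrArg adjoint hPSaP
    simp only [adjoint_comp, adjoint_adjoint, hPadj] at h
    intro x
    have := DFunLike.congr_fun h x
    simpa [hPdef] using this
  have pSP : ∀ x, S (T (Td x)) = T (Td (S x)) := fun x => by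
    have e1 : T (Td (S (T (Td x)))) = S (T (Td x)) := by
      rw [pst, p1, ← pst]
    rw [← e1, hPSP2]
  -- Q = Td ∘L T
  set Q := Td ∘L T with hQdef
  have hQadj : adjoint Q = Q := h4
  have hQSaQ : Q ∘L (adjoint S ∘L Q) = Q ∘L adjoint S := by
    ext x
    simp only [hQdef, comp_apply]
    rw [psa, p1, psa]
  have hQSQ2 : ∀ x, Td (T (S (Td (T x)))) = S (Td (T x)) := by
    have h := congrArg adjoint hQSaQ
    simp only [adjoint_comp, adjoint_adjoint, hQadj] at h
    intro x
    have := DFunLike.congr_fun h x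
    simpa [hQdef] using this
  have hQSQ1 : ∀ x, Td (T (S (Td (T x)))) = Td (T (S x)) := fun x => by
    rw [← pst, p1, pst]
  have pSQ : ∀ x, S (Td (T x)) = Td (T (S x)) := fun x =>
    (hQSQ2 x).symm.trans (hQSQ1 x)
  ext x
  simp only [comp_apply]
  calc S (Td x) = S (Td (T (Td x))) := by rw [p2]
    _ = Td (T (S (Td x))) := pSQ (Td x)
    _ = Td (S (T (Td x))) := by rw [pst]
    _ = Td (T (Td (S x))) := by rw [pSP]
    _ = Td (S x) := p2 (S x)
end

section
/- Let T be a bounded linear operator on a Hilbert space with closed range and Moore–Penrose inverse T†. Then T is self-adjoint if and only if T = (T† T) T*. -/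
open ContinuousLinearMap

theorem selfAdjoint_iff_mp_identity
    {H : Type*} [NormedAddCommGroup H] [InnerProductSpace ℂ H] [CompleteSpace H]
    (T : H →L[ℂ] H) (hT : IsClosed (Set.range T))
    (Td : H →L[ℂ] H) (hTd : IsMoorePenrose T Td) :
    IsSelfAdjoint T ↔ T = (Td ∘L T) ∘L adjoint T := by
  obtain ⟨h1, h2, h3, h4⟩ := hTd
  constructor
  · intro hs
    have hT' : adjoint T = T := hs
    rw [hT']
    calc T = adjoint T := hT'.symm
    _ = adjoint (T ∘L Td ∘L T) := by rw [h1]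
    _ = adjoint (Td ∘L T) ∘L adjoint T := by rw [adjoint_comp]
    _ = (Td ∘L T) ∘L T := by rw [h4, hT']
  · intro h
    have : adjoint T = T := by
      conv_lhs => rw [h]
      rw [adjoint_comp, adjoint_adjoint, h4, h1]
    exact this
end

section
/- Let V be the Volterra operator on L²[0,1], (Vf)(x) = ∫₀ˣ f(y) dy. Then the identity function f(x) = x lies in Ran(V) but not in Ran(V V*); in particular Ran(V V*) is a proper subset of Ran(V). -/
/-!
`V 1` is the identity. If `x = V V* g` almost everywhere, then `V* g` is almost everywhere the
function `K y = ∫_y^1 g`, which is continuous and vanishes at `1`; so `x` agrees on `[0,1]` with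
`F x = ∫_0^x K`, whose left derivative at `1` is `K 1 = 0 ≠ 1`.
-/

open MeasureTheory ContinuousLinearMap Set
open scoped ENNReal

theorem setIntegral_Ioc_restrict_eq_intervalIntegral {s : Set ℝ} {f : ℝ → ℝ} {a b : ℝ}
    (hab : a ≤ b) (hs : Ioc a b ⊆ s) :
    ∫ y in Ioc a b, f y ∂(volume.restrict s) = ∫ y in a..b, f y := by
  rw [Measure.restrict_restrict_of_subset hs, intervalIntegral.integral_of_le hab]

theorem hasDerivWithinAt_intervalIntegral_Icc {K : ℝ → ℝ} {a b x : ℝ}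
    (hK : ContinuousOn K (Icc a b)) (hx : x ∈ Icc a b) :
    HasDerivWithinAt (fun u => ∫ t in a..u, K t) (K x) (Icc a b) x := by
  -- provides the `FTCFilter x (𝓝[Icc a b] x) (𝓝[Icc a b] x)` instance
  have : Fact (x ∈ Icc a b) := ⟨hx⟩
  exact intervalIntegral.integral_hasDerivWithinAt_right
    ((hK.mono (Icc_subset_Icc_right hx.2)).intervalIntegrable_of_Icc hx.1)
    (hK.stronglyMeasurableAtFilter_nhdsWithin measurableSet_Icc x) (hK x hx)

theorem not_ae_eq_id_of_hasDerivWithinAt_zero {F : ℝ → ℝ} (hF : ContinuousOn F (Icc 0 1))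
    (hF' : HasDerivWithinAt F 0 (Icc 0 1) 1) : ¬ F =ᵐ[volume.restrict (Icc (0 : ℝ) 1)] id := by
  intro h
  have hFid : EqOn F id (Icc 0 1) :=
    Measure.eqOn_Icc_of_ae_eq volume zero_ne_one h hF continuousOn_id
  have hone : (1 : ℝ) ∈ Icc 0 1 := right_mem_Icc.2 zero_le_one
  exact zero_ne_one <| (uniqueDiffOn_Icc_zero_one 1 hone).eq_deriv _ hF'
    ((hasDerivWithinAt_id 1 _).congr hFid (hFid hone))

section Volterra

local notation "μ₀₁" => volume.restrict (Icc (0 : ℝ) 1)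

variable {p : ℝ≥0∞} [Fact (1 ≤ p)]

theorem mem_range_of_volterra {V : Lp ℝ p μ₀₁ →L[ℝ] Lp ℝ p μ₀₁}
    (hV : ∀ f, ∀ᵐ x ∂μ₀₁, V f x = ∫ y in Ioc 0 x, f y ∂μ₀₁)
    {u : Lp ℝ p μ₀₁} (hu : ∀ᵐ x ∂μ₀₁, u x = x) : u ∈ range V := by
  have hone : MemLp (fun _ : ℝ => (1 : ℝ)) p μ₀₁ := memLp_const 1
  refine ⟨hone.toLp _, Lp.ext ?_⟩
  filter_upwards [hV (hone.toLp _), hu, ae_restrict_mem measurableSet_Icc] with x hVx hux hx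
  rw [hVx, hux, integral_congr_ae (ae_restrict_of_ae hone.coeFn_toLp),
    setIntegral_Ioc_restrict_eq_intervalIntegral hx.1
      (Ioc_subset_Icc_self.trans (Icc_subset_Icc_right hx.2))]
  simp

theorem exists_hasDerivWithinAt_zero_ae_eq_volterra_comp
    {V W : Lp ℝ p μ₀₁ →L[ℝ] Lp ℝ p μ₀₁}
    (hV : ∀ f, ∀ᵐ x ∂μ₀₁, V f x = ∫ y in Ioc 0 x, f y ∂μ₀₁)
    (hW : ∀ f, ∀ᵐ x ∂μ₀₁, W f x = ∫ y in Ioc x 1, f y ∂μ₀₁) (g : Lp ℝ p μ₀₁) :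
    ∃ F : ℝ → ℝ, ContinuousOn F (Icc 0 1) ∧ HasDerivWithinAt F 0 (Icc 0 1) 1 ∧
      V (W g) =ᵐ[μ₀₁] F := by
  set K : ℝ → ℝ := fun y => ∫ t in y..1, g t
  have hK : ContinuousOn K (Icc 0 1) := by
    have hg : IntegrableOn g (uIcc 0 1) := by
      rw [uIcc_of_le zero_le_one]
      exact (Lp.memLp g).integrable Fact.out
    simpa only [uIcc_of_le zero_le_one] using
      intervalIntegral.continuousOn_primitive_interval_left hg
  have hWK : W g =ᵐ[μ₀₁] K := by
    filter_upwards [hW g, ae_restrict_mem measurableSet_Icc] with y hWy hy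
    rw [hWy, setIntegral_Ioc_restrict_eq_intervalIntegral hy.2
      (Ioc_subset_Icc_self.trans (Icc_subset_Icc_left hy.1))]
  refine ⟨fun x => ∫ t in 0..x, K t,
    fun x hx => (hasDerivWithinAt_intervalIntegral_Icc hK hx).continuousWithinAt, ?_, ?_⟩
  · simpa [K] using hasDerivWithinAt_intervalIntegral_Icc hK (right_mem_Icc.2 zero_le_one)
  · filter_upwards [hV (W g), ae_restrict_mem measurableSet_Icc] with x hVx hx
    rw [hVx, integral_congr_ae (ae_restrict_of_ae hWK),
      setIntegral_Ioc_restrict_eq_intervalIntegral hx.1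
        (Ioc_subset_Icc_self.trans (Icc_subset_Icc_right hx.2))]

end Volterra

theorem volterra_range_proper
    (μ : Measure ℝ) (hμ : μ = volume.restrict (Set.Icc 0 1))
    (V : Lp ℝ 2 μ →L[ℝ] Lp ℝ 2 μ)
    (hV : ∀ f : Lp ℝ 2 μ, ∀ᵐ x ∂μ, V f x = ∫ y in Set.Ioc 0 x, f y ∂μ)
    (hVadj : ∀ f : Lp ℝ 2 μ, ∀ᵐ x ∂μ, adjoint V f x = ∫ y in Set.Ioc x 1, f y ∂μ)
    (id2 : Lp ℝ 2 μ) (hid : ∀ᵐ x ∂μ, id2 x = x) :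
    id2 ∈ Set.range V ∧ id2 ∉ Set.range (V ∘L adjoint V) ∧
      Set.range (V ∘L adjoint V) ⊂ Set.range V := by
  subst hμ
  have h_mem : id2 ∈ range V := mem_range_of_volterra hV hid
  have h_not_mem : id2 ∉ range (V ∘L adjoint V) := by
    rintro ⟨g, rfl⟩
    obtain ⟨F, hF, hF', hVF⟩ := exists_hasDerivWithinAt_zero_ae_eq_volterra_comp hV hVadj g
    refine not_ae_eq_id_of_hasDerivWithinAt_zero hF hF' ?_
    filter_upwards [hVF, hid] with x hVx hx
    rw [← hVx]
    exact hx
  refine ⟨h_mem, h_not_mem, ?_, fun h => h_not_mem (h h_mem)⟩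
  rw [coe_comp]
  exact range_comp_subset_range _ _
end

section
/- Let T be a bounded linear operator with closed range between Hilbert spaces, and for ω > 0 let R_ω = T*(ω·1 + T T*)⁻¹. Then R_ω converges to the Moore–Penrose inverse T† in the strong operator topology (indeed in operator norm) as ω → 0⁺. -/
open ContinuousLinearMap

/-!
Put `B = (ω + T T*)⁻¹`; it exists and `‖B‖ ≤ ω⁻¹` because `ω + T T*` is coercive with constant
`ω`. The Penrose equations give `T* = T† T T*` and `T† = T† T†* T*`, hence
`T* B - T† = -ω T† B = -ω T† T†* (T* B)`. The first form bounds `‖T* B‖` by `2 ‖T†‖`, and then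
the second gives `‖T* B - T†‖ ≤ 2 ‖T†‖³ ω`.
-/

open scoped InnerProductSpace NNReal

namespace ContinuousLinearMap

variable {𝕜 E : Type*} [RCLike 𝕜] [NormedAddCommGroup E] [InnerProductSpace 𝕜 E]

lemma norm_ring_inverse_le_of_forall_le_norm_inner_map [CompleteSpace E] (f : E →L[𝕜] E)
    {c : ℝ≥0} (hc : 0 < c) (h : ∀ x, ‖x‖ ^ 2 * c ≤ ‖⟪f x, x⟫_𝕜‖) :
    ‖Ring.inverse f‖ ≤ (c : ℝ)⁻¹ := by
  have hf := isUnit_of_forall_le_norm_inner_map f hc h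
  refine opNorm_le_bound _ (by positivity) fun y => ?_
  have hy : f (Ring.inverse f y) = y := by
    simpa using congr($(Ring.mul_inverse_cancel f hf) y)
  simpa [hy] using bound_of_antilipschitz f (antilipschitz_of_forall_le_inner_map f hc h)
    (Ring.inverse f y)

lemma IsPositive.norm_sq_mul_le_norm_inner_smul_one_add {P : E →L[𝕜] E} (hP : P.IsPositive)
    (ω : ℝ) (x : E) : ‖x‖ ^ 2 * ω ≤ ‖⟪((ω : 𝕜) • 1 + P) x, x⟫_𝕜‖ := calc
  ‖x‖ ^ 2 * ω ≤ RCLike.re ⟪((ω : 𝕜) • 1 + P) x, x⟫_𝕜 := by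
    simp only [add_apply, smul_apply, one_apply_eq_self, inner_add_left, inner_smul_left, map_add,
      RCLike.conj_ofReal, RCLike.re_ofReal_mul, inner_self_eq_norm_sq]
    nlinarith [hP.re_inner_nonneg_left x]
  _ ≤ _ := RCLike.re_le_norm _

lemma IsPositive.norm_ring_inverse_smul_one_add_le [CompleteSpace E] {P : E →L[𝕜] E}
    (hP : P.IsPositive) {ω : ℝ} (hω : 0 < ω) : ‖Ring.inverse ((ω : 𝕜) • 1 + P)‖ ≤ ω⁻¹ :=
  norm_ring_inverse_le_of_forall_le_norm_inner_map _ (c := ⟨ω, hω.le⟩) hω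
    (hP.norm_sq_mul_le_norm_inner_smul_one_add ω)

lemma IsPositive.smul_one_add_comp_ring_inverse [CompleteSpace E] {P : E →L[𝕜] E}
    (hP : P.IsPositive) {ω : ℝ} (hω : 0 < ω) :
    ((ω : 𝕜) • 1 + P) ∘L Ring.inverse ((ω : 𝕜) • 1 + P) = 1 :=
  Ring.mul_inverse_cancel _ <| isUnit_of_forall_le_norm_inner_map _ (c := ⟨ω, hω.le⟩) hω
    (hP.norm_sq_mul_le_norm_inner_smul_one_add ω)

end ContinuousLinearMap

namespace IsMoorePenrose

variable {H K : Type*} [NormedAddCommGroup H] [InnerProductSpace ℂ H] [CompleteSpace H]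
  [NormedAddCommGroup K] [InnerProductSpace ℂ K] [CompleteSpace K]
  {T : H →L[ℂ] K} {Td : K →L[ℂ] H}

lemma adjoint_eq_comp_comp_adjoint (h : IsMoorePenrose T Td) :
    adjoint T = Td ∘L T ∘L adjoint T := by
  conv_lhs => rw [← h.1]
  rw [adjoint_comp, adjoint_comp, ← comp_assoc, ← adjoint_comp, h.2.2.2]

lemma eq_comp_adjoint_comp_adjoint (h : IsMoorePenrose T Td) :
    Td = Td ∘L adjoint Td ∘L adjoint T := by
  conv_lhs => rw [← h.2.1, ← h.2.2.1, adjoint_comp]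

lemma adjoint_comp_sub_eq (h : IsMoorePenrose T Td) {ω : ℂ} {B : K →L[ℂ] K}
    (hB : (ω • 1 + T ∘L adjoint T) ∘L B = 1) :
    adjoint T ∘L B - Td = -(ω • Td ∘L B) := by
  have hTB : T ∘L adjoint T ∘L B = 1 - ω • B := by
    rw [← hB, add_comp, smul_comp, one_def, id_comp, add_sub_cancel_left, comp_assoc]
  rw [h.adjoint_eq_comp_comp_adjoint, comp_assoc, comp_assoc, hTB, comp_sub, one_def, comp_id,
    comp_smul]
  abel

lemma norm_adjoint_comp_sub_le (h : IsMoorePenrose T Td) {ω : ℝ} (hω : 0 < ω) {B : K →L[ℂ] K}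
    (hB : ((ω : ℂ) • 1 + T ∘L adjoint T) ∘L B = 1) (hB_norm : ‖B‖ ≤ ω⁻¹) :
    ‖adjoint T ∘L B - Td‖ ≤ 2 * ‖Td‖ ^ 3 * ω := by
  set R := adjoint T ∘L B
  have hR_sub : ‖R - Td‖ = ω * ‖Td ∘L B‖ := by
    rw [h.adjoint_comp_sub_eq hB, norm_neg, norm_smul, Complex.norm_real, Real.norm_of_nonneg hω.le]
  have hTdB : ω * ‖Td ∘L B‖ ≤ ‖Td‖ := calc
    ω * ‖Td ∘L B‖ ≤ ω * (‖Td‖ * ω⁻¹) := by gcongr; exact (opNorm_comp_le _ _).trans (by gcongr)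
    _ = ‖Td‖ := by field_simp
  have hR : ‖R‖ ≤ 2 * ‖Td‖ := by linarith [norm_le_norm_add_norm_sub' R Td]
  have hTd_eq : Td ∘L B = Td ∘L adjoint Td ∘L R := by
    conv_lhs => rw [h.eq_comp_adjoint_comp_adjoint]
    simp only [R, comp_assoc]
  calc ‖R - Td‖ = ω * ‖Td ∘L adjoint Td ∘L R‖ := by rw [hR_sub, hTd_eq]
    _ ≤ ω * (‖Td‖ * (‖adjoint Td‖ * ‖R‖)) := by
        gcongr
        exact (opNorm_comp_le _ _).trans (by gcongr; exact opNorm_comp_le _ _)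
    _ ≤ ω * (‖Td‖ * (‖Td‖ * (2 * ‖Td‖))) := by rw [adjoint.norm_map]; gcongr
    _ = 2 * ‖Td‖ ^ 3 * ω := by ring

end IsMoorePenrose

theorem tikhonov_approximation_of_mp_general
    {H K : Type*} [NormedAddCommGroup H] [InnerProductSpace ℂ H] [CompleteSpace H]
    [NormedAddCommGroup K] [InnerProductSpace ℂ K] [CompleteSpace K]
    (T : H →L[ℂ] K)
    (Td : K →L[ℂ] H) (hTd : IsMoorePenrose T Td) :
    Filter.Tendsto
      (fun ω : ℝ => ‖adjoint T ∘L Ring.inverse ((ω : ℂ) • (1 : K →L[ℂ] K) + T ∘L adjoint T) - Td‖)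
      (nhdsWithin 0 (Set.Ioi 0)) (nhds 0) := by
  have hP := isPositive_self_comp_adjoint T
  have h_bound : Filter.Tendsto (fun ω : ℝ => 2 * ‖Td‖ ^ 3 * ω) (nhdsWithin 0 (Set.Ioi 0))
      (nhds 0) := by
    simpa using ((Filter.tendsto_id (x := nhds (0 : ℝ))).const_mul (2 * ‖Td‖ ^ 3)).mono_left
      nhdsWithin_le_nhds
  refine squeeze_zero' (.of_forall fun _ => norm_nonneg _) ?_ h_bound
  filter_upwards [self_mem_nhdsWithin] with ω hω
  exact hTd.norm_adjoint_comp_sub_le hω (hP.smul_one_add_comp_ring_inverse hω)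
    (hP.norm_ring_inverse_smul_one_add_le hω)

theorem tikhonov_approximation_of_mp
    {H K : Type*} [NormedAddCommGroup H] [InnerProductSpace ℂ H] [CompleteSpace H]
    [NormedAddCommGroup K] [InnerProductSpace ℂ K] [CompleteSpace K]
    (T : H →L[ℂ] K) (hT : IsClosed (Set.range T))
    (Td : K →L[ℂ] H) (hTd : IsMoorePenrose T Td) :
    Filter.Tendsto
      (fun ω : ℝ => ‖adjoint T ∘L Ring.inverse ((ω : ℂ) • (1 : K →L[ℂ] K) + T ∘L adjoint T) - Td‖)
      (nhdsWithin 0 (Set.Ioi 0)) (nhds 0) :=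
  tikhonov_approximation_of_mp_general T Td hTd
end
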